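/- arXiv:1404.7289 — 6 statements merged into one kernel-verified Lean document; each statement's English description precedes it below -/
import Mathlib

section
/- Let r ≥ 2 be an integer and α ∈ ℂ. Then: (i) for every integer m with 1 ≤ m ≤ r−1, Σ_{l ∈ H_r} (q^{(α+l)m} − q^{−(α+l)m}) = 0; and (ii) Σ_{l ∈ H_r} (q^{(α+l)r} − q^{−(α+l)r}) = (−1)^{r−1} · r · (q^{rα} − q^{−rα}). (These are the sum evaluations underlying the surgery computations with Kirby colors, in particular the computation showing Z(S²×S¹, P_k×S¹, ω_α) = δ_{k,0} in the lemma on nilpotent endomorphisms.) -/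
/-- `q^x = exp(π i x / r)`. -/
noncomputable def qc (r : ℕ) (x : ℂ) : ℂ := Complex.exp (Real.pi * Complex.I * x / r)

/-- `⦃x⦄ = q^x - q^{-x}`. -/
noncomputable def br (r : ℕ) (x : ℂ) : ℂ := qc r x - qc r (-x)

/-- `H_r = {1-r, 3-r, …, r-1}`, the `r` integers `2j - (r-1)` for `j = 0, …, r-1`. -/
def Hr (r : ℕ) : Finset ℤ := (Finset.range r).image (fun j : ℕ => 2 * (j : ℤ) - ((r : ℤ) - 1))

/-! Writing `l = 2j - (r - 1)`, the sum of `q^{(α+l)m}` over `H_r` is `q^{(α-(r-1))m}` times the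
geometric sum of `q^{2m}`, an `r`-th root of unity that differs from `1` unless `r ∣ m`; so it
vanishes for `1 ≤ m ≤ r - 1`. For `m = r`, instead, `q^{lr} = (-1)^l = (-1)^{r-1}` because every
`l ∈ H_r` has the parity of `r - 1`, so the `r` summands coincide. -/

open Finset

theorem qc_add (r : ℕ) (x y : ℂ) : qc r (x + y) = qc r x * qc r y := by
  rw [qc, qc, qc, ← Complex.exp_add]
  ring_nf

theorem qc_intCast_mul (r : ℕ) (k : ℤ) (x : ℂ) : qc r (k * x) = qc r x ^ k := by
  rw [qc, qc, ← Complex.exp_int_mul]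
  ring_nf

theorem qc_intCast_mul_self {r : ℕ} (hr : r ≠ 0) (k : ℤ) : qc r (k * r) = (-1) ^ k := by
  have hr' : (r : ℂ) ≠ 0 := Nat.cast_ne_zero.mpr hr
  rw [qc, show (Real.pi : ℂ) * Complex.I * (k * r) / r = k * (Real.pi * Complex.I) by
    field_simp, Complex.exp_int_mul, Complex.exp_pi_mul_I]

theorem isPrimitiveRoot_qc_two {r : ℕ} (hr : r ≠ 0) : IsPrimitiveRoot (qc r 2) r := by
  rw [qc, show (Real.pi : ℂ) * Complex.I * 2 / r = 2 * Real.pi * Complex.I / r by ring]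
  exact Complex.isPrimitiveRoot_exp r hr

theorem br_add_intCast_mul_self {r : ℕ} (hr : r ≠ 0) (x : ℂ) (k : ℤ) :
    br r (x + k * r) = (-1) ^ k * br r x := by
  have hneg : -(x + k * r) = -x + ((-k : ℤ) : ℂ) * r := by push_cast; ring
  rw [br, br, hneg, qc_add, qc_add, qc_intCast_mul_self hr, qc_intCast_mul_self hr,
    zpow_neg, ← inv_zpow, inv_neg_one]
  ring

theorem sum_Hr {M : Type*} [AddCommMonoid M] (r : ℕ) (f : ℤ → M) :
    ∑ l ∈ Hr r, f l = ∑ j ∈ range r, f (2 * j - (r - 1)) := by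
  refine sum_image fun a _ b _ h => ?_
  omega

theorem card_Hr (r : ℕ) : #(Hr r) = r := by
  simpa using sum_Hr (M := ℕ) r fun _ => 1

theorem neg_one_zpow_of_mem_Hr {r : ℕ} {l : ℤ} (hl : l ∈ Hr r) :
    (-1 : ℂ) ^ l = (-1) ^ (r - 1) := by
  obtain ⟨j, hj, rfl⟩ := mem_image.mp hl
  have hj : j < r := mem_range.mp hj
  rw [show 2 * (j : ℤ) - (r - 1) = (r - 1 : ℕ) + 2 * (j - (r - 1 : ℕ)) by omega,
    zpow_add₀ (by norm_num), zpow_mul, zpow_natCast]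
  norm_num

theorem sum_Hr_qc_mul_eq_zero {r : ℕ} (hr : r ≠ 0) (α : ℂ) {m : ℤ} (hm : ¬ (r : ℤ) ∣ m) :
    ∑ l ∈ Hr r, qc r ((α + l) * m) = 0 := by
  have hprim := isPrimitiveRoot_qc_two hr
  set ζ := qc r 2 ^ m
  have hζr : ζ ^ r = 1 := by
    rw [← zpow_natCast, ← zpow_mul, mul_comm, zpow_mul, hprim.zpow_eq_one, one_zpow]
  have hζ1 : ζ ≠ 1 := fun h => hm ((hprim.zpow_eq_one_iff_dvd m).mp h)
  have hterm (j : ℕ) : qc r ((α + ((2 * j - (r - 1) : ℤ) : ℂ)) * m)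
      = qc r ((α - (r - 1)) * m) * ζ ^ j := by
    rw [show (α + ((2 * j - (r - 1) : ℤ) : ℂ)) * m
        = (α - (r - 1)) * m + ((m * j : ℤ) : ℂ) * 2 by push_cast; ring,
      qc_add, qc_intCast_mul, zpow_mul, zpow_natCast]
  simp only [sum_Hr r, hterm, ← mul_sum, geom_sum_eq hζ1, hζr, sub_self, zero_div, mul_zero]

theorem sum_Hr_br_mul_eq_zero {r : ℕ} (hr : r ≠ 0) (α : ℂ) {m : ℤ} (hm : ¬ (r : ℤ) ∣ m) :
    ∑ l ∈ Hr r, br r ((α + l) * m) = 0 := by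
  have hneg (l : ℤ) : -((α + l) * m) = (α + l) * (-m : ℤ) := by push_cast; ring
  simp only [br, sum_sub_distrib, hneg, sum_Hr_qc_mul_eq_zero hr α hm,
    sum_Hr_qc_mul_eq_zero hr α (m := -m) (by rwa [Int.dvd_neg]), sub_zero]

theorem br_mul_self_of_mem_Hr {r : ℕ} (α : ℂ) {l : ℤ} (hl : l ∈ Hr r) :
    br r ((α + l) * r) = (-1) ^ (r - 1) * br r (r * α) := by
  have hr : r ≠ 0 := by rintro rfl; simp [Hr] at hl
  rw [show (α + l) * r = r * α + l * r by ring, br_add_intCast_mul_self hr,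
    neg_one_zpow_of_mem_Hr hl]

theorem statement2_general (r : ℕ) (α : ℂ) :
    (∀ m : ℕ, 1 ≤ m → m ≤ r - 1 →
      ∑ l ∈ Hr r, br r ((α + (l : ℂ)) * (m : ℂ)) = 0) ∧
    ∑ l ∈ Hr r, br r ((α + (l : ℂ)) * (r : ℂ))
      = (-1 : ℂ) ^ (r - 1) * (r : ℂ) * br r ((r : ℂ) * α) := by
  refine ⟨fun m hm hmr => ?_, ?_⟩
  · have hdvd : ¬ (r : ℤ) ∣ m := fun h => by have := Int.le_of_dvd (by omega) h; omega
    simpa using sum_Hr_br_mul_eq_zero (by omega) α hdvd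
  · rw [sum_congr rfl fun l hl => br_mul_self_of_mem_Hr α hl, sum_const, card_Hr, nsmul_eq_mul]
    ring

/-- (i) for `1 ≤ m ≤ r-1`, `Σ_{l ∈ H_r} (q^{(α+l)m} − q^{−(α+l)m}) = 0`;
(ii) `Σ_{l ∈ H_r} (q^{(α+l)r} − q^{−(α+l)r}) = (−1)^{r−1} · r · (q^{rα} − q^{−rα})`. -/
theorem statement2 (r : ℕ) (hr : 2 ≤ r) (α : ℂ) :
    (∀ m : ℕ, 1 ≤ m → m ≤ r - 1 →
      ∑ l ∈ Hr r, br r ((α + (l : ℂ)) * (m : ℂ)) = 0) ∧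
    ∑ l ∈ Hr r, br r ((α + (l : ℂ)) * (r : ℂ))
      = (-1 : ℂ) ^ (r - 1) * (r : ℂ) * br r ((r : ℂ) * α) :=
  statement2_general r α
end

section
/- Let r ≥ 3 be an odd integer and g ≥ 2 an integer. Then the function β ↦ (r^{g}/r) · Σ_{k ∈ H_r} (⦃rβ⦄/⦃β+k⦄)^{2g−2} (a function of β ∈ ℂ) tends to r^{3g−3} as β tends to 0 within ℂ∖{0}. (This is the evaluation of the paper's Verlinde formula giving dim 𝕍(Σ) = r^{3g−3} for a genus-g surface with no marked points and integral cohomology class, when r is odd.) -/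
/-!
For odd `r` the set `H_r` contains `0`. At `k = 0` the summand is `(⦃rβ⦄/⦃β⦄)^{2g-2}`, a quotient of
two functions vanishing at `0` with derivatives `2πi` and `2πi/r`, so it tends to `r^{2g-2}`.
For `k ≠ 0` we have `0 < |k| < r`, so `⦃k⦄ ≠ 0` while `⦃rβ⦄ → 0`, and the summand tends to `0`.
Hence the whole expression tends to `r^{g-1} · r^{2g-2} = r^{3g-3}`.
-/

open Complex Filter Topology Real

theorem tendsto_div_of_hasDerivAt_of_eq_zero {𝕜 : Type*} [NontriviallyNormedField 𝕜]
    {f g : 𝕜 → 𝕜} {a b c : 𝕜} (hf : HasDerivAt f a c) (hg : HasDerivAt g b c)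
    (hfc : f c = 0) (hgc : g c = 0) (hb : b ≠ 0) :
    Tendsto (fun x => f x / g x) (𝓝[≠] c) (𝓝 (a / b)) := by
  have hslope := (hasDerivAt_iff_tendsto_slope.mp hf).div (hasDerivAt_iff_tendsto_slope.mp hg) hb
  refine hslope.congr' ?_
  filter_upwards [self_mem_nhdsWithin] with x hx
  have hxc : x - c ≠ 0 := sub_ne_zero.mpr hx
  rw [Pi.div_apply, slope_def_field, slope_def_field, hfc, hgc, sub_zero, sub_zero,
    div_div_div_cancel_right₀ hxc]

@[simp]
theorem qc_zero (r : ℕ) : qc r 0 = 1 := by simp [qc]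

@[simp]
theorem br_zero (r : ℕ) : br r 0 = 0 := by simp [br]

theorem continuous_br (r : ℕ) : Continuous (br r) := by
  unfold br qc
  fun_prop

theorem hasDerivAt_br (r : ℕ) (x : ℂ) :
    HasDerivAt (br r) (π * I / r * (qc r x + qc r (-x))) x := by
  have h₁ : HasDerivAt (fun y : ℂ => π * I * y / r) (π * I / r) x := by
    simpa using ((hasDerivAt_id x).const_mul (π * I : ℂ)).div_const (r : ℂ)
  have h₂ : HasDerivAt (fun y : ℂ => π * I * (-y) / r) (-(π * I / r)) x := by
    simpa [neg_div] using ((hasDerivAt_neg x).const_mul (π * I : ℂ)).div_const (r : ℂ)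
  exact (h₁.cexp.sub h₂.cexp).congr_deriv (by simp only [qc]; ring)

theorem br_eq_zero_iff {r : ℕ} (hr : r ≠ 0) {x : ℂ} : br r x = 0 ↔ ∃ n : ℤ, x = n * r := by
  have hr' : (r : ℂ) ≠ 0 := Nat.cast_ne_zero.mpr hr
  rw [br, qc, qc, sub_eq_zero, exp_eq_exp_iff_exists_int]
  refine exists_congr fun n => ⟨fun h => ?_, fun h => ?_⟩
  · field_simp at h
    linear_combination h / 2
  · rw [h]
    field_simp
    ring

theorem tendsto_br_mul_div_br {r : ℕ} (hr : r ≠ 0) :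
    Tendsto (fun β : ℂ => br r (r * β) / br r β) (𝓝[≠] 0) (𝓝 r) := by
  have hr' : (r : ℂ) ≠ 0 := Nat.cast_ne_zero.mpr hr
  have hg : HasDerivAt (br r) (π * I / r * 2) 0 := by
    simpa [one_add_one_eq_two] using hasDerivAt_br r 0
  have hf : HasDerivAt (fun β : ℂ => br r (r * β)) (π * I / r * 2 * r) 0 := by
    simpa [one_add_one_eq_two, Function.comp_def] using
      (hasDerivAt_br r (r * 0)).comp (0 : ℂ) ((hasDerivAt_id (0 : ℂ)).const_mul (r : ℂ))
  have hb : (π * I / r * 2 : ℂ) ≠ 0 := by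
    simp [hr', I_ne_zero]
  convert tendsto_div_of_hasDerivAt_of_eq_zero hf hg (by simp) (br_zero r) hb using 2
  field_simp

theorem abs_lt_of_mem_Hr {r : ℕ} {k : ℤ} (hk : k ∈ Hr r) : |k| < r := by
  obtain ⟨j, hj, rfl⟩ := Finset.mem_image.mp hk
  rw [Finset.mem_range] at hj
  rw [abs_lt]
  constructor <;> omega

theorem zero_mem_Hr {r : ℕ} (hr : Odd r) : (0 : ℤ) ∈ Hr r := by
  obtain ⟨m, rfl⟩ := hr
  exact Finset.mem_image.mpr ⟨m, Finset.mem_range.mpr (by omega), by push_cast; ring⟩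

theorem br_intCast_ne_zero {r : ℕ} {k : ℤ} (hk : k ≠ 0) (hkr : |k| < r) : br r k ≠ 0 := by
  have hr : r ≠ 0 := by
    have := (abs_nonneg k).trans_lt hkr
    omega
  rw [Ne, br_eq_zero_iff hr]
  rintro ⟨n, hn⟩
  have hkn : k = n * r := by exact_mod_cast hn
  exact hk (Int.eq_zero_of_abs_lt_dvd ⟨n, by rw [hkn, mul_comm]⟩ hkr)

theorem tendsto_br_div_br_add_intCast_pow {r : ℕ} {k : ℤ} (hk : |k| < r) {n : ℕ} (hn : n ≠ 0) :
    Tendsto (fun β : ℂ => (br r (r * β) / br r (β + k)) ^ n) (𝓝[≠] 0)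
      (𝓝 (if k = 0 then (r : ℂ) ^ n else 0)) := by
  split_ifs with hk0
  · have hr : r ≠ 0 := by
      rw [hk0, abs_zero] at hk
      omega
    simpa [hk0] using (tendsto_br_mul_div_br hr).pow n
  · have hnum : Tendsto (fun β : ℂ => br r (r * β)) (𝓝[≠] 0) (𝓝 0) := by
      simpa using (((continuous_br r).comp' (continuous_const_mul (r : ℂ))).tendsto 0).mono_left
        nhdsWithin_le_nhds
    have hden : Tendsto (fun β : ℂ => br r (β + k)) (𝓝[≠] 0) (𝓝 (br r k)) := by
      simpa using (((continuous_br r).comp' (continuous_add_const (k : ℂ))).tendsto 0).mono_left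
        nhdsWithin_le_nhds
    simpa [hn] using (hnum.div hden (br_intCast_ne_zero hk0 hk)).pow n

theorem statement3_general (r g : ℕ) (hodd : Odd r) (hg : 2 ≤ g) :
    Filter.Tendsto
      (fun β : ℂ => ((r : ℂ) ^ g / (r : ℂ)) *
        ∑ k ∈ Hr r, (br r ((r : ℂ) * β) / br r (β + (k : ℂ))) ^ (2 * g - 2))
      (nhdsWithin 0 {(0 : ℂ)}ᶜ) (nhds ((r : ℂ) ^ (3 * g - 3))) := by
  have hr : (r : ℂ) ≠ 0 := Nat.cast_ne_zero.mpr hodd.pos.ne'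
  have hsum := tendsto_finsetSum (Hr r) fun k hk =>
    tendsto_br_div_br_add_intCast_pow (abs_lt_of_mem_Hr hk) (n := 2 * g - 2) (by omega)
  rw [Finset.sum_ite_eq', if_pos (zero_mem_Hr hodd)] at hsum
  convert hsum.const_mul ((r : ℂ) ^ g / r) using 2
  rw [div_mul_eq_mul_div, ← pow_add, show g + (2 * g - 2) = 3 * g - 3 + 1 by omega, pow_succ,
    mul_div_cancel_right₀ _ hr]

/-- for odd `r ≥ 3` and `g ≥ 2`, the Verlinde expression
`(r^g/r) · Σ_{k ∈ H_r} (⦃rβ⦄/⦃β+k⦄)^{2g−2}` tends to `r^{3g−3}` as `β → 0`, `β ≠ 0`. -/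
theorem statement3 (r g : ℕ) (hr : 3 ≤ r) (hodd : Odd r) (hg : 2 ≤ g) :
    Filter.Tendsto
      (fun β : ℂ => ((r : ℂ) ^ g / (r : ℂ)) *
        ∑ k ∈ Hr r, (br r ((r : ℂ) * β) / br r (β + (k : ℂ))) ^ (2 * g - 2))
      (nhdsWithin 0 {(0 : ℂ)}ᶜ) (nhds ((r : ℂ) ^ (3 * g - 3))) :=
  statement3_general r g hodd hg
end

section
/- Let g ≥ 2 be an integer, let M = Fin g → ℤ with standard ℤ-basis (x_i), let A = ℂ ⧸ 2ℤ (the quotient of the additive group ℂ by the subgroup of integer multiples of 2), and let ω : M → A be an additive group homomorphism. Call an element of A integral if it is the image of an integer under the quotient map ℂ → A. Assume 2·ω(x₀) is not integral. Then there exists a ℤ-basis (y_i) of M with y₀ = x₀ such that for every i with 1 ≤ i ≤ g−1, neither ω(y_i) nor ω(y₀ − y_i) is integral. (This is the basis-modification step in the proof of the paper's proposition on the existence of ω-regular spines: a handlebody bounding a genus-g surface with cohomology class ω contains an ω-regular spine iff 2ω is non-integral.) -/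
/-- The quotient group `ℂ ⧸ 2ℤ`. -/
abbrev CModTwoZ : Type := ℂ ⧸ AddSubgroup.zmultiples (2 : ℂ)

/-- An element of `ℂ ⧸ 2ℤ` is integral if it is the image of an integer. -/
def IsIntegralC2Z (a : CModTwoZ) : Prop :=
  ∃ n : ℤ, (QuotientAddGroup.mk (n : ℂ) : CModTwoZ) = a

/-!
The new basis is the image of the standard one under a transvection fixing `x₀`:
`y_i = x_i + c_i x₀`. The integral elements form a subgroup `I`, and with `a = ω(x₀)`,
`2a ∉ I` forces `a ∉ I`; so for each `b = ω(x_i)` one of `c_i = 0, 1, 2` keeps both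
`b + c_i a` and `a - (b + c_i a)` outside `I`.
-/

theorem AddSubgroup.exists_add_zsmul_notMem_and_sub_notMem {A : Type*} [AddCommGroup A]
    (I : AddSubgroup A) {a : A} (ha : 2 • a ∉ I) (b : A) :
    ∃ c : ℤ, b + c • a ∉ I ∧ a - (b + c • a) ∉ I := by
  have ha' : a ∉ I := fun h => ha (I.nsmul_mem h 2)
  by_cases hb : b ∈ I
  · refine ⟨2, fun h => ha ?_, fun h => ha' ?_⟩
    · simpa [two_zsmul, two_nsmul] using I.sub_mem h hb
    · rw [← I.neg_mem_iff]
      convert I.add_mem h hb using 1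
      abel
  by_cases hba : b - a ∈ I
  · refine ⟨1, fun h => ha ?_, fun h => hb ?_⟩
    · simpa [two_nsmul, ← sub_add, sub_sub] using I.sub_mem h hba
    · simpa using I.neg_mem h
  · refine ⟨0, by simpa using hb, fun h => hba ?_⟩
    simpa using I.neg_mem h

theorem Module.Basis.exists_add_smul_of_ne {ι R M : Type*} [CommRing R] [AddCommGroup M]
    [Module R M] (b : Basis ι R M) (z : ι) (c : ι → R) :
    ∃ b' : Basis ι R M, b' z = b z ∧ ∀ i ≠ z, b' i = b i + c i • b z := by
  classical
  let f : Module.Dual R M := b.constr R (Function.update c z 0)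
  have hf : f (b z) = 0 := by simp [f]
  refine ⟨b.map (LinearEquiv.transvection hf), ?_, fun i hi => ?_⟩
  · simp [LinearMap.transvection.apply, hf]
  · simp [LinearMap.transvection.apply, f, hi]

def integralSubgroupC2Z : AddSubgroup CModTwoZ :=
  ((QuotientAddGroup.mk' _).comp (Int.castAddHom ℂ)).range

theorem isIntegralC2Z_iff_mem (a : CModTwoZ) : IsIntegralC2Z a ↔ a ∈ integralSubgroupC2Z :=
  Iff.rfl

/-- if `2·ω(x₀)` is non-integral, there is a ℤ-basis `(y_i)` of `Fin g → ℤ`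
with `y₀ = x₀` and, for all `i ≠ 0`, neither `ω(y_i)` nor `ω(y₀ − y_i)` integral. -/
theorem statement8 (g : ℕ) (hg : 2 ≤ g)
    (ω : (Fin g → ℤ) →+ CModTwoZ)
    (h : ¬ IsIntegralC2Z (2 • ω (Pi.single (⟨0, by omega⟩ : Fin g) 1))) :
    ∃ b : Module.Basis (Fin g) ℤ (Fin g → ℤ),
      b ⟨0, by omega⟩ = Pi.single (⟨0, by omega⟩ : Fin g) 1 ∧
      ∀ i : Fin g, i ≠ ⟨0, by omega⟩ →
        ¬ IsIntegralC2Z (ω (b i)) ∧ ¬ IsIntegralC2Z (ω (b ⟨0, by omega⟩ - b i)) := by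
  set z : Fin g := ⟨0, by omega⟩
  rw [isIntegralC2Z_iff_mem] at h
  choose c hc using fun i : Fin g =>
    integralSubgroupC2Z.exists_add_zsmul_notMem_and_sub_notMem h (ω (Pi.single i 1))
  obtain ⟨b, hbz, hbi⟩ := (Pi.basisFun ℤ (Fin g)).exists_add_smul_of_ne z c
  refine ⟨b, by simpa using hbz, fun i hi => ?_⟩
  simp only [isIntegralC2Z_iff_mem, hbz, hbi i hi, Pi.basisFun_apply, map_add, map_sub, map_zsmul]
  exact hc i
end

section
/- Let p ≥ 1 be an integer and let q, q′, c be integers each coprime to p. Suppose that for every ζ ∈ ℂ with ζ^p = 1 and ζ ≠ 1, (1−ζ^{q})(1−ζ)(1−ζ^{−q})(1−ζ^{−1}) = (1−ζ^{c·q′})(1−ζ^{c})(1−ζ^{−c·q′})(1−ζ^{−c}), where the powers of ζ are integer powers (ζ ≠ 0). Then the multiset {1, −1, (q : ZMod p), −(q : ZMod p)} equals the multiset {(c : ZMod p), −(c : ZMod p), (c·q′ : ZMod p), −(c·q′ : ZMod p)} in ZMod p. (This is the step in the proof of the paper's lens-space classification proposition obtained by applying Franz's Lemma to the absolute values of the r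 = 2 quantum invariants of lens spaces.) -/
/-!
Both sides of the hypothesis are evaluations, at the characters `k ↦ ζ^k` of `ZMod p`, of
products `(1 - [x])(1 - [-x])(1 - [y])(1 - [-y])` in the group ring `ℤ[ZMod p]`. Characters
separate the elements of the group ring of a finite abelian group, so the two products agree
there. Expanded, such a product has a negative coefficient exactly at `±x, ±y`, and its constant
coefficient is `6` or `4` according as `y = ±x` or not. When `2x, 2y ≠ 0` (as for units of
`ZMod p`, `p ≥ 3`) this recovers the multiset `{x, -x, y, -y}`. For `p ≤ 2` every unit is `±1`.
-/

open AddMonoidAlgebra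

section GroupRing

variable {G : Type*} [AddCommGroup G]

lemma neg_ne_self_of_two_nsmul_ne_zero {x : G} (hx : 2 • x ≠ 0) : -x ≠ x := by
  rw [Ne, neg_eq_iff_add_eq_zero, ← two_nsmul]
  exact hx

lemma ne_zero_of_two_nsmul_ne_zero {x : G} (hx : 2 • x ≠ 0) : x ≠ 0 := by
  rintro rfl
  exact hx (nsmul_zero 2)

def pmPair (x : G) : Multiset G := {x, -x}

lemma mem_pmPair {x t : G} : t ∈ pmPair x ↔ t = x ∨ t = -x := by
  simp [pmPair]

lemma mem_pmPair_self (x : G) : x ∈ pmPair x :=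
  mem_pmPair.2 (Or.inl rfl)

lemma pmPair_eq_of_mem {x y : G} (h : y ∈ pmPair x) : pmPair y = pmPair x := by
  rcases mem_pmPair.1 h with rfl | rfl
  · rfl
  · rw [pmPair, pmPair, neg_neg, Multiset.pair_comm]

lemma nodup_pmPair_add_pmPair {x y : G} (hx : 2 • x ≠ 0) (hy : 2 • y ≠ 0)
    (hxy : y ∉ pmPair x) :
    (pmPair x + pmPair y).Nodup := by
  have nodup_pmPair {a : G} (ha : 2 • a ≠ 0) : (pmPair a).Nodup := by
    simpa [pmPair] using (neg_ne_self_of_two_nsmul_ne_zero ha).symm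
  refine Multiset.nodup_add.2 ⟨nodup_pmPair hx, nodup_pmPair hy,
    Multiset.disjoint_left.2 fun hax hay => hxy ?_⟩
  rw [← pmPair_eq_of_mem hax, pmPair_eq_of_mem hay]
  exact mem_pmPair_self y

/-- The group-ring counterpart of `|1 - ζ^x|² = (1 - ζ^x)(1 - ζ^(-x))`. -/
noncomputable def normSqOneSub (x : G) : AddMonoidAlgebra ℤ G :=
  (1 - single x 1) * (1 - single (-x) 1)

lemma normSqOneSub_neg (x : G) : normSqOneSub (-x) = normSqOneSub x := by
  rw [normSqOneSub, normSqOneSub, neg_neg, mul_comm]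

lemma normSqOneSub_eq (x : G) :
    normSqOneSub x = single 0 2 - single x 1 - single (-x) 1 := by
  have h1 : (1 : AddMonoidAlgebra ℤ G) = single 0 1 := one_def
  have h2 : (single 0 2 : AddMonoidAlgebra ℤ G) = single 0 1 + single 0 1 := by
    rw [← single_add]; rfl
  rw [normSqOneSub, sub_mul, mul_sub, mul_sub, single_mul_single, add_neg_cancel, h2, h1]
  simp only [mul_one, single_mul_single, zero_add, add_zero]
  abel

lemma normSqOneSub_mul_normSqOneSub (x y : G) :
    normSqOneSub x * normSqOneSub y =
      single 0 4 - single x 2 - single (-x) 2 - single y 2 - single (-y) 2 +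
        single (x + y) 1 + single (x - y) 1 + single (y - x) 1 + single (-x - y) 1 := by
  simp only [normSqOneSub_eq, sub_mul, mul_sub, single_mul_single]
  simp only [add_zero, zero_add, mul_one, one_mul]
  rw [show (2 : ℤ) * 2 = 4 by norm_num, neg_add_eq_sub, ← sub_eq_add_neg, ← sub_eq_add_neg]
  abel

variable [DecidableEq G]

lemma coeff_normSqOneSub_mul_normSqOneSub (x y t : G) :
    (normSqOneSub x * normSqOneSub y).coeff t =
      (if 0 = t then 4 else 0) - (if x = t then 2 else 0) - (if -x = t then 2 else 0) -
        (if y = t then 2 else 0) - (if -y = t then 2 else 0) + (if x + y = t then 1 else 0) +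
        (if x - y = t then 1 else 0) + (if y - x = t then 1 else 0) +
        (if -x - y = t then 1 else 0) := by
  simp only [normSqOneSub_mul_normSqOneSub, coeff_add, coeff_sub, coeff_single, Finsupp.coe_add,
    Finsupp.coe_sub, Pi.add_apply, Pi.sub_apply, Finsupp.single_apply]

lemma coeff_normSqOneSub_mul_normSqOneSub_self_neg {x y : G} (hx : 2 • x ≠ 0)
    (hy : 2 • y ≠ 0) :
    (normSqOneSub x * normSqOneSub y).coeff x < 0 := by
  have hy0 : y ≠ 0 := ne_zero_of_two_nsmul_ne_zero hy
  have hsum : x + y ≠ x := by simpa using hy0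
  have hdiff : x - y ≠ x := by simpa using hy0
  rw [coeff_normSqOneSub_mul_normSqOneSub, if_neg (ne_zero_of_two_nsmul_ne_zero hx).symm,
    if_pos rfl, if_neg (neg_ne_self_of_two_nsmul_ne_zero hx), if_neg hsum, if_neg hdiff]
  by_cases h1 : y - x = x
  · have h2 : -x - y ≠ x := fun h2 => hy <| by
      rw [two_nsmul]
      calc y + y = (y - x) - (-x - y) := by abel
        _ = 0 := by rw [h1, h2, sub_self]
    rw [if_pos h1, if_neg h2]
    split_ifs <;> omega
  · rw [if_neg h1]
    split_ifs <;> omega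

lemma coeff_normSqOneSub_mul_normSqOneSub_nonneg {x y t : G} (ht : t ∉ pmPair x + pmPair y) :
    0 ≤ (normSqOneSub x * normSqOneSub y).coeff t := by
  simp only [Multiset.mem_add, mem_pmPair, not_or] at ht
  obtain ⟨⟨h1, h2⟩, h3, h4⟩ := ht
  rw [coeff_normSqOneSub_mul_normSqOneSub, if_neg (Ne.symm h1), if_neg (Ne.symm h2),
    if_neg (Ne.symm h3), if_neg (Ne.symm h4)]
  split_ifs <;> omega

lemma coeff_zero_normSqOneSub_mul_normSqOneSub {x y : G} (hx : 2 • x ≠ 0) (hy : 2 • y ≠ 0) :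
    (normSqOneSub x * normSqOneSub y).coeff 0 = if y ∈ pmPair x then 6 else 4 := by
  have hx0 := ne_zero_of_two_nsmul_ne_zero hx
  have hy0 := ne_zero_of_two_nsmul_ne_zero hy
  have hxx := neg_ne_self_of_two_nsmul_ne_zero hx
  rw [coeff_normSqOneSub_mul_normSqOneSub, if_pos rfl, if_neg hx0, if_neg (neg_ne_zero.2 hx0),
    if_neg hy0, if_neg (neg_ne_zero.2 hy0)]
  simp only [sub_eq_zero, add_eq_zero_iff_eq_neg', neg_sub_left, neg_eq_zero, eq_comm (a := x)]
  by_cases h1 : y = x <;> by_cases h2 : y = -x <;> simp_all [neg_eq_iff_eq_neg, mem_pmPair]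

lemma coeff_normSqOneSub_mul_normSqOneSub_neg_iff {x y t : G} (hx : 2 • x ≠ 0)
    (hy : 2 • y ≠ 0) :
    (normSqOneSub x * normSqOneSub y).coeff t < 0 ↔ t ∈ pmPair x + pmPair y := by
  refine ⟨fun h => not_not.1 fun ht => (coeff_normSqOneSub_mul_normSqOneSub_nonneg ht).not_gt h,
    fun ht => ?_⟩
  have hx' : 2 • -x ≠ 0 := by rwa [smul_neg, neg_ne_zero]
  have hy' : 2 • -y ≠ 0 := by rwa [smul_neg, neg_ne_zero]
  rcases Multiset.mem_add.1 ht with ht | ht <;> rcases mem_pmPair.1 ht with rfl | rfl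
  · exact coeff_normSqOneSub_mul_normSqOneSub_self_neg hx hy
  · rw [← normSqOneSub_neg x]
    exact coeff_normSqOneSub_mul_normSqOneSub_self_neg hx' hy
  · rw [mul_comm]
    exact coeff_normSqOneSub_mul_normSqOneSub_self_neg hy hx
  · rw [mul_comm, ← normSqOneSub_neg y]
    exact coeff_normSqOneSub_mul_normSqOneSub_self_neg hy' hx

theorem pmPair_add_pmPair_eq_of_normSqOneSub_mul_eq {x y z w : G} (hx : 2 • x ≠ 0)
    (hy : 2 • y ≠ 0) (hz : 2 • z ≠ 0) (hw : 2 • w ≠ 0)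
    (h : normSqOneSub x * normSqOneSub y = normSqOneSub z * normSqOneSub w) :
    pmPair x + pmPair y = pmPair z + pmPair w := by
  have hmem (t : G) : t ∈ pmPair x + pmPair y ↔ t ∈ pmPair z + pmPair w := by
    rw [← coeff_normSqOneSub_mul_normSqOneSub_neg_iff hx hy,
      ← coeff_normSqOneSub_mul_normSqOneSub_neg_iff hz hw, h]
  have hdeg : y ∈ pmPair x ↔ w ∈ pmPair z := by
    have h0 := congrArg (fun f => f.coeff 0) h
    simp only [coeff_zero_normSqOneSub_mul_normSqOneSub hx hy,
      coeff_zero_normSqOneSub_mul_normSqOneSub hz hw] at h0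
    split_ifs at h0 <;> tauto
  by_cases hyx : y ∈ pmPair x
  · have hzx : z ∈ pmPair x := by
      have := (hmem z).2 (Multiset.mem_add.2 (Or.inl (mem_pmPair_self z)))
      rwa [pmPair_eq_of_mem hyx, Multiset.mem_add, or_self] at this
    rw [pmPair_eq_of_mem hyx, pmPair_eq_of_mem (hdeg.1 hyx), pmPair_eq_of_mem hzx]
  · exact (Multiset.Nodup.ext (nodup_pmPair_add_pmPair hx hy hyx)
      (nodup_pmPair_add_pmPair hz hw (hdeg.not.1 hyx))).2 hmem

end GroupRing

section Characters

variable {G : Type*} [AddCommGroup G]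

lemma lift_normSqOneSub {A : Type*} [CommRing A] (ψ : AddChar G A) (x : G) :
    lift ℤ A G ψ.toMonoidHom (normSqOneSub x) = (1 - ψ x) * (1 - ψ (-x)) := by
  simp [normSqOneSub]

variable [Fintype G]

lemma lift_addChar_eq_sum (ψ : AddChar G ℂ) (f : AddMonoidAlgebra ℤ G) :
    lift ℤ ℂ G ψ.toMonoidHom f = ∑ b, (f.coeff b : ℂ) * ψ b := by
  rw [lift_apply, Finsupp.sum_fintype _ _ (by simp)]
  simp only [zsmul_eq_mul, AddChar.toMonoidHom_apply, toAdd_ofAdd]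

theorem eq_zero_of_forall_lift_addChar_eq_zero {f : AddMonoidAlgebra ℤ G}
    (hf : ∀ ψ : AddChar G ℂ, lift ℤ ℂ G ψ.toMonoidHom f = 0) : f = 0 := by
  classical
  ext a
  -- orthogonality of characters: `∑ ψ, ψ (b - a)` is `|G|` at `b = a` and `0` elsewhere
  have hcard : (Fintype.card G : ℂ) * f.coeff a = 0 := by
    calc (Fintype.card G : ℂ) * f.coeff a
        = ∑ b, (f.coeff b : ℂ) * ∑ ψ : AddChar G ℂ, ψ (b - a) := by
          simp [AddChar.sum_apply_eq_ite, sub_eq_zero, mul_comm]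
      _ = ∑ ψ : AddChar G ℂ, ψ (-a) * lift ℤ ℂ G ψ.toMonoidHom f := by
          simp only [lift_addChar_eq_sum, Finset.mul_sum]
          rw [Finset.sum_comm]
          simp [sub_eq_neg_add, AddChar.map_add_eq_mul, mul_left_comm]
      _ = 0 := by simp [hf]
  simpa using hcard

theorem eq_of_forall_lift_addChar_eq {f g : AddMonoidAlgebra ℤ G}
    (h : ∀ ψ : AddChar G ℂ,
      lift ℤ ℂ G ψ.toMonoidHom f = lift ℤ ℂ G ψ.toMonoidHom g) : f = g :=
  sub_eq_zero.1 <| eq_zero_of_forall_lift_addChar_eq_zero fun ψ => by rw [map_sub, h, sub_self]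

end Characters

namespace ZMod

lemma two_nsmul_ne_zero_of_isUnit {n : ℕ} (hn : 3 ≤ n) {x : ZMod n} (hx : IsUnit x) :
    2 • x ≠ 0 := by
  rw [Ne, nsmul_eq_mul, Nat.cast_ofNat, hx.mul_left_eq_zero, ← Nat.cast_ofNat,
    ZMod.natCast_eq_zero_iff]
  exact fun h => absurd (Nat.le_of_dvd two_pos h) (by omega)

lemma mem_pmPair_one_of_isUnit {n : ℕ} (hn : n ≤ 2) {x : ZMod n} (hx : IsUnit x) :
    x ∈ pmPair 1 := by
  rw [mem_pmPair]
  interval_cases n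
  · exact Int.isUnit_iff.1 hx
  · exact Or.inl (Subsingleton.elim _ _)
  · rcases (by decide : ∀ y : ZMod 2, y = 0 ∨ y = 1) x with rfl | rfl
    · exact absurd hx not_isUnit_zero
    · exact Or.inl rfl

lemma lift_addChar_normSqOneSub_intCast {n : ℕ} (ψ : AddChar (ZMod n) ℂ) (m : ℤ) :
    AddMonoidAlgebra.lift ℤ ℂ (ZMod n) ψ.toMonoidHom (normSqOneSub (m : ZMod n)) =
      (1 - ψ 1 ^ m) * (1 - ψ 1 ^ (-m)) := by
  rw [lift_normSqOneSub, ← Int.cast_neg, ← ψ.map_zsmul_eq_zpow, ← ψ.map_zsmul_eq_zpow,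
    zsmul_one, zsmul_one]

lemma addChar_one_pow_eq_one (n : ℕ) (ψ : AddChar (ZMod n) ℂ) : ψ 1 ^ n = 1 := by
  rw [← ψ.map_nsmul_eq_pow, nsmul_one, ZMod.natCast_self, ψ.map_zero_eq_one]

end ZMod

theorem statement11_general (p : ℕ) (q q' c : ℤ)
    (hq : IsCoprime q (p : ℤ)) (hq' : IsCoprime q' (p : ℤ)) (hc : IsCoprime c (p : ℤ))
    (h : ∀ ζ : ℂ, ζ ^ p = 1 → ζ ≠ 1 →
      (1 - ζ ^ q) * (1 - ζ) * (1 - ζ ^ (-q)) * (1 - ζ⁻¹)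
        = (1 - ζ ^ (c * q')) * (1 - ζ ^ c) * (1 - ζ ^ (-(c * q'))) * (1 - ζ ^ (-c))) :
    ({1, -1, ((q : ZMod p)), -((q : ZMod p))} : Multiset (ZMod p))
      = {((c : ZMod p)), -((c : ZMod p)), (((c * q' : ℤ) : ZMod p)), -(((c * q' : ℤ) : ZMod p))} := by
  have hqu := (ZMod.coe_int_isUnit_iff_isCoprime q p).2 hq.symm
  have hcu := (ZMod.coe_int_isUnit_iff_isCoprime c p).2 hc.symm
  have hcqu := (ZMod.coe_int_isUnit_iff_isCoprime (c * q') p).2 (hc.mul_left hq').symm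
  change pmPair 1 + pmPair (q : ZMod p) = pmPair (c : ZMod p) + pmPair ((c * q' : ℤ) : ZMod p)
  rcases le_or_gt p 2 with hp | hp
  · rw [pmPair_eq_of_mem (ZMod.mem_pmPair_one_of_isUnit hp hqu),
      pmPair_eq_of_mem (ZMod.mem_pmPair_one_of_isUnit hp hcu),
      pmPair_eq_of_mem (ZMod.mem_pmPair_one_of_isUnit hp hcqu)]
  · have : NeZero p := ⟨by omega⟩
    refine pmPair_add_pmPair_eq_of_normSqOneSub_mul_eq
      (ZMod.two_nsmul_ne_zero_of_isUnit hp isUnit_one) (ZMod.two_nsmul_ne_zero_of_isUnit hp hqu)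
      (ZMod.two_nsmul_ne_zero_of_isUnit hp hcu) (ZMod.two_nsmul_ne_zero_of_isUnit hp hcqu)
      (eq_of_forall_lift_addChar_eq fun ψ => ?_)
    rw [← Int.cast_one, map_mul, map_mul]
    simp only [ZMod.lift_addChar_normSqOneSub_intCast, zpow_one, zpow_neg_one]
    by_cases hψ : ψ 1 = 1
    · simp [hψ]
    · linear_combination h (ψ 1) (ZMod.addChar_one_pow_eq_one p ψ) hψ

/-- if for every `p`-th root of unity `ζ ≠ 1`,
`(1−ζ^q)(1−ζ)(1−ζ^{−q})(1−ζ^{−1}) = (1−ζ^{cq′})(1−ζ^c)(1−ζ^{−cq′})(1−ζ^{−c})`,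
then the multisets `{1, −1, q, −q}` and `{c, −c, cq′, −cq′}` agree in `ZMod p`. -/
theorem statement11 (p : ℕ) (hp : 1 ≤ p) (q q' c : ℤ)
    (hq : IsCoprime q (p : ℤ)) (hq' : IsCoprime q' (p : ℤ)) (hc : IsCoprime c (p : ℤ))
    (h : ∀ ζ : ℂ, ζ ^ p = 1 → ζ ≠ 1 →
      (1 - ζ ^ q) * (1 - ζ) * (1 - ζ ^ (-q)) * (1 - ζ⁻¹)
        = (1 - ζ ^ (c * q')) * (1 - ζ ^ c) * (1 - ζ ^ (-(c * q'))) * (1 - ζ ^ (-c))) :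
    ({1, -1, ((q : ZMod p)), -((q : ZMod p))} : Multiset (ZMod p))
      = {((c : ZMod p)), -((c : ZMod p)), (((c * q' : ℤ) : ZMod p)), -(((c * q' : ℤ) : ZMod p))} :=
  statement11_general p q q' c hq hq' hc h
end

section
/- Let p > 1 be an integer, let q and q′ be integers with 0 < q < p and 0 < q′ < p, both coprime to p, and let c be an integer coprime to p. Suppose that for every integer k not divisible by p, (−1)^k · exp(π·I·k²·q/p) · sin(π·c·k·q′/p) · sin(π·c·k/p) = (−1)^{c·k} · exp(π·I·c²·k²·q′/p) · sin(π·k·q/p) · sin(π·k/p) (an identity of complex numbers; all four sines are nonzero since p ∤ k and q, q′, c are coprime to p). Then q ≡ q′ (mod p) or q·q′ ≡ 1 (mod p). (This is the number-theoretic heart of the paper's proposition that the non-semi-simple sl(2) quantum invariants at r = 2 — equivalently the canonically normalized Reidemeister torsion — classify lens spaces: Z₂(L(p,q),ω) takes the values (−1)^k e^{iπk²q/p}/(4i·sin(πkq/p)·sin(πk/p)), and L(p,q) ≅ L(p,q′) preserving orientation iff q ≡ q′ or qq′ ≡ 1 mod p.) -/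
/-!
Put `ζ = exp(iπ/p)`, a primitive `2p`-th root of unity. Then `(-1)^k = ζ^(pk)`,
`exp(iπ x/p) = ζ^x` and `sin(π x/p) = (ζ^(-x) - ζ^x) i/2`, so each side of the hypothesis is
a power of `ζ` times a real product of two sines. At `k = 1` these real factors are nonzero,
so the ratio of the two powers of `ζ` is real, which forces `q ≡ c²q' (mod p)`. Writing
`q = c²q' + pm` and using `k² ≡ k (mod 2)`, the quadratic phases `ζ^(k²q)` and `ζ^(c²k²q')`
differ only by the linear phase `ζ^(pmk)`, and the hypothesis becomes, for every `k`, an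
identity between two signed sums of four characters `k ↦ ζ^(dk)` of `ℤ/2p`. By orthogonality
of characters the signed multiplicities of every exponent agree mod `2p`. Reading them off at
the exponents `pc + q ± 1` of the right-hand side gives `c ≡ ±1` or `cq' ≡ ±1 (mod p)`, hence
`q ≡ c²q' ≡ q'` or `qq' ≡ (cq')² ≡ 1`.
-/

open Complex Finset Real

namespace IsPrimitiveRoot

variable {K : Type*} [Field K] {ζ : K} {N : ℕ}

theorem sum_range_zpow_mul (hζ : IsPrimitiveRoot ζ N) (d : ℤ) :
    ∑ k ∈ range N, ζ ^ (d * k) = if (N : ℤ) ∣ d then (N : K) else 0 := by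
  simp_rw [zpow_mul, zpow_natCast]
  split_ifs with hd
  · simp [(hζ.zpow_eq_one_iff_dvd d).2 hd]
  · rw [geom_sum_eq (mt (hζ.zpow_eq_one_iff_dvd d).1 hd), ← zpow_natCast, ← zpow_mul,
      mul_comm, zpow_mul, zpow_natCast, hζ.pow_eq_one, one_zpow, sub_self, zero_div]

theorem sum_range_zpow_neg_mul_mul_sum {ι : Type*} [Fintype ι] (hζ : IsPrimitiveRoot ζ N)
    (a d : ι → ℤ) (x : ℤ) :
    ∑ k ∈ range N, ζ ^ (-(x * k)) * ∑ i, (a i : K) * ζ ^ (d i * k)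
      = N * ∑ i with d i ≡ x [ZMOD N], (a i : K) := by
  obtain rfl | hN := eq_or_ne N 0
  · simp
  have hζ0 : ζ ≠ 0 := hζ.ne_zero hN
  calc ∑ k ∈ range N, ζ ^ (-(x * k)) * ∑ i, (a i : K) * ζ ^ (d i * k)
      = ∑ i, (a i : K) * ∑ k ∈ range N, ζ ^ ((d i - x) * k) := by
        simp_rw [mul_sum, sub_mul, zpow_sub₀ hζ0, zpow_neg]
        rw [sum_comm]
        refine sum_congr rfl fun i _ => sum_congr rfl fun k _ => ?_
        ring
    _ = N * ∑ i with d i ≡ x [ZMOD N], (a i : K) := by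
        simp_rw [hζ.sum_range_zpow_mul, mul_sum, sum_filter, Int.modEq_comm,
          Int.modEq_iff_dvd]
        refine sum_congr rfl fun i _ => ?_
        split_ifs <;> ring

theorem sum_filter_modEq_eq_of_forall_sum_zpow_eq [CharZero K] (hζ : IsPrimitiveRoot ζ N)
    (hN : N ≠ 0) {ι κ : Type*} [Fintype ι] [Fintype κ] (a d : ι → ℤ) (b e : κ → ℤ)
    (h : ∀ k : ℕ, ∑ i, (a i : K) * ζ ^ (d i * k) = ∑ j, (b j : K) * ζ ^ (e j * k))
    (x : ℤ) :
    ∑ i with d i ≡ x [ZMOD N], a i = ∑ j with e j ≡ x [ZMOD N], b j := by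
  have := hζ.sum_range_zpow_neg_mul_mul_sum a d x
  simp_rw [h, hζ.sum_range_zpow_neg_mul_mul_sum b e x] at this
  exact_mod_cast mul_left_cancel₀ (Nat.cast_ne_zero.2 hN) this.symm

theorem zpow_mul_mul_sq {n : ℕ} (hζ : IsPrimitiveRoot ζ (2 * n)) (a k : ℤ) :
    ζ ^ (n * a * k ^ 2) = ζ ^ (n * a * k) := by
  obtain rfl | hn := eq_or_ne n 0
  · simp
  obtain ⟨j, hj⟩ := Int.even_mul_pred_self k
  calc ζ ^ (n * a * k ^ 2) = ζ ^ (n * a * k + (2 * n : ℕ) * (a * j)) := by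
        congr 1
        push_cast
        linear_combination n * a * hj
    _ = ζ ^ (n * a * k) := by
        rw [zpow_add₀ (hζ.ne_zero (by omega)), zpow_mul ζ ((2 * n : ℕ) : ℤ), zpow_natCast,
          hζ.pow_eq_one, one_zpow, mul_one]

theorem zpow_mul_eq_of_zpow_add_sq_eq {n : ℕ} (hζ : IsPrimitiveRoot ζ (2 * n)) (hn : n ≠ 0)
    {q q' c m k : ℤ} {X Y : K} (hm : q - c ^ 2 * q' = n * m)
    (h : ζ ^ (n * k + k ^ 2 * q) * X = ζ ^ (n * (c * k) + c ^ 2 * k ^ 2 * q') * Y) :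
    ζ ^ (n * (1 + m) * k) * X = ζ ^ (n * c * k) * Y := by
  have hζ0 := hζ.ne_zero (by omega)
  have hphase : ζ ^ (n * k + k ^ 2 * q) = ζ ^ (c ^ 2 * k ^ 2 * q') * ζ ^ (n * (1 + m) * k) := by
    rw [show n * k + k ^ 2 * q = c ^ 2 * k ^ 2 * q' + n * k + n * m * k ^ 2 by
        linear_combination k ^ 2 * hm,
      zpow_add₀ hζ0, hζ.zpow_mul_mul_sq, ← zpow_add₀ hζ0, ← zpow_add₀ hζ0]
    congr 1
    ring
  rw [hphase, zpow_add₀ hζ0, ← mul_assoc (n : ℤ) c k] at h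
  apply mul_left_cancel₀ (zpow_ne_zero (c ^ 2 * k ^ 2 * q') hζ0)
  linear_combination h

end IsPrimitiveRoot

theorem zpow_mul_sub_mul_sub_eq_sum_units {K : Type*} [Field K] {ζ : K} (hζ : ζ ≠ 0)
    (A B C k : ℤ) :
    ζ ^ (A * k) * (ζ ^ (-(B * k)) - ζ ^ (B * k)) * (ζ ^ (-(C * k)) - ζ ^ (C * k))
      = ∑ st : ℤˣ × ℤˣ,
          (((st.1 * st.2 : ℤˣ) : ℤ) : K) * ζ ^ ((A + st.1 * B + st.2 * C) * k) := by
  simp [Fintype.sum_prod_type, UnitsInt.univ, add_mul, zpow_add₀ hζ]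
  ring

/-- The coefficient of `k ↦ ζ ^ (x * k)` in
`k ↦ ζ ^ (A * k) * (ζ ^ (-(B * k)) - ζ ^ (B * k)) * (ζ ^ (-(C * k)) - ζ ^ (C * k))`
for `ζ` of order `N`. -/
def sinProdCoeff (N A B C x : ℤ) : ℤ :=
  ∑ st : ℤˣ × ℤˣ with A + st.1 * B + st.2 * C ≡ x [ZMOD N], ((st.1 * st.2 : ℤˣ) : ℤ)

theorem sinProdCoeff_eq (N A B C x : ℤ) :
    sinProdCoeff N A B C x
      = (if A + B + C ≡ x [ZMOD N] then 1 else 0) - (if A + B - C ≡ x [ZMOD N] then 1 else 0)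
        - (if A - B + C ≡ x [ZMOD N] then 1 else 0)
        + (if A - B - C ≡ x [ZMOD N] then 1 else 0) := by
  simp [sinProdCoeff, sum_filter, Fintype.sum_prod_type, UnitsInt.univ, ← sub_eq_add_neg]
  split_ifs <;> ring

theorem IsPrimitiveRoot.sinProdCoeff_eq_of_forall_eq {K : Type*} [Field K] [CharZero K] {ζ : K}
    {N : ℕ} (hζ : IsPrimitiveRoot ζ N) (hN : N ≠ 0) {A B C A' B' C' : ℤ}
    (h : ∀ k : ℤ,
      ζ ^ (A * k) * (ζ ^ (-(B * k)) - ζ ^ (B * k)) * (ζ ^ (-(C * k)) - ζ ^ (C * k))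
        = ζ ^ (A' * k) * (ζ ^ (-(B' * k)) - ζ ^ (B' * k)) * (ζ ^ (-(C' * k)) - ζ ^ (C' * k)))
    (x : ℤ) : sinProdCoeff N A B C x = sinProdCoeff N A' B' C' x :=
  hζ.sum_filter_modEq_eq_of_forall_sum_zpow_eq hN _ _ _ _
    (fun k => by simpa only [zpow_mul_sub_mul_sub_eq_sum_units (hζ.ne_zero hN)] using h k) x

theorem sq_modEq_one_or_sq_modEq_one_of_sinProdCoeff_eq {n A B C A' B' : ℤ} (hB'0 : 0 < B')
    (hB'n : B' < n) (h : ∀ x, sinProdCoeff (2 * n) A B C x = sinProdCoeff (2 * n) A' B' 1 x) :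
    B ^ 2 ≡ 1 [ZMOD n] ∨ C ^ 2 ≡ 1 [ZMOD n] := by
  have not_modEq : ∀ u v : ℤ, 0 < v - u → v - u < 2 * n →
      ¬ u ≡ v [ZMOD 2 * n] ∧ ¬ v ≡ u [ZMOD 2 * n] := by
    intro u v h0 h1
    suffices ¬ u ≡ v [ZMOD 2 * n] from ⟨this, fun h => this h.symm⟩
    intro huv
    have := Int.le_of_dvd h0 (Int.modEq_iff_dvd.1 huv)
    omega
  have h₁ := h (A' + B' + 1)
  have h₂ := h (A' + B' - 1)
  rw [sinProdCoeff_eq, sinProdCoeff_eq, if_pos (Int.ModEq.refl _),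
    if_neg (not_modEq (A' + B' - 1) (A' + B' + 1) (by omega) (by omega)).1,
    if_neg (not_modEq (A' - B' + 1) (A' + B' + 1) (by omega) (by omega)).1] at h₁
  rw [sinProdCoeff_eq, sinProdCoeff_eq, if_pos (Int.ModEq.refl _),
    if_neg (not_modEq (A' + B' - 1) (A' + B' + 1) (by omega) (by omega)).2,
    if_neg (not_modEq (A' - B' - 1) (A' + B' - 1) (by omega) (by omega)).1] at h₂
  have hPS :
      A + B + C ≡ A' + B' + 1 [ZMOD 2 * n] ∨ A - B - C ≡ A' + B' + 1 [ZMOD 2 * n] := by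
    by_contra! hno
    rw [if_neg hno.1, if_neg hno.2] at h₁
    split_ifs at h₁ <;> omega
  have hQR :
      A + B - C ≡ A' + B' - 1 [ZMOD 2 * n] ∨ A - B + C ≡ A' + B' - 1 [ZMOD 2 * n] := by
    by_contra! hno
    rw [if_neg hno.1, if_neg hno.2] at h₂
    split_ifs at h₂ <;> omega
  have sq_modEq_one :
      ∀ D e : ℤ, e ^ 2 = 1 → 2 * D ≡ 2 * e [ZMOD 2 * n] → D ^ 2 ≡ 1 [ZMOD n] :=
    fun D e he hD => he ▸ (Int.ModEq.mul_left_cancel' two_ne_zero hD).pow 2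
  rcases hPS with hP | hS <;> rcases hQR with hQ | hR
  · exact Or.inr (sq_modEq_one C 1 (by norm_num) (by convert hP.sub hQ using 1 <;> ring))
  · exact Or.inl (sq_modEq_one B 1 (by norm_num) (by convert hP.sub hR using 1 <;> ring))
  · exact Or.inl (sq_modEq_one B (-1) (by norm_num) (by convert hQ.sub hS using 1 <;> ring))
  · exact Or.inr (sq_modEq_one C (-1) (by norm_num) (by convert hR.sub hS using 1 <;> ring))

section

variable {n : ℕ}

theorem isPrimitiveRoot_exp_pi_mul_I_div (hn : n ≠ 0) :
    IsPrimitiveRoot (cexp (π * I / n)) (2 * n) := by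
  convert Complex.isPrimitiveRoot_exp (2 * n) (by positivity) using 2
  push_cast
  field_simp

theorem exp_pi_mul_I_div_zpow (n : ℕ) (x : ℤ) :
    cexp (π * I / n) ^ x = cexp (π * I * x / n) := by
  rw [← Complex.exp_int_mul]
  ring_nf

theorem neg_one_zpow_eq_exp_pi_mul_I_div_zpow (hn : n ≠ 0) (k : ℤ) :
    (-1 : ℂ) ^ k = cexp (π * I / n) ^ (n * k) := by
  rw [zpow_mul, zpow_natCast, ← Complex.exp_nat_mul, mul_div_cancel₀ _ (by exact_mod_cast hn),
    exp_pi_mul_I]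

theorem ofReal_sin_pi_mul_div (n : ℕ) (x : ℤ) :
    (Real.sin (π * x / n) : ℂ) = (cexp (π * I / n) ^ (-x) - cexp (π * I / n) ^ x) * I / 2 := by
  rw [exp_pi_mul_I_div_zpow, exp_pi_mul_I_div_zpow, ofReal_sin, Complex.sin]
  push_cast
  ring_nf

theorem ofReal_sin_pi_mul_div_mul_sin (n : ℕ) (x y : ℤ) :
    ((Real.sin (π * x / n) * Real.sin (π * y / n) : ℝ) : ℂ)
      = -((cexp (π * I / n) ^ (-x) - cexp (π * I / n) ^ x)
          * (cexp (π * I / n) ^ (-y) - cexp (π * I / n) ^ y)) / 4 := by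
  rw [ofReal_mul, ofReal_sin_pi_mul_div, ofReal_sin_pi_mul_div]
  linear_combination ((cexp (π * I / n) ^ (-x) - cexp (π * I / n) ^ x)
    * (cexp (π * I / n) ^ (-y) - cexp (π * I / n) ^ y) / 4) * I_sq

theorem sin_pi_mul_div_eq_zero_iff (hn : n ≠ 0) (x : ℤ) :
    Real.sin (π * x / n) = 0 ↔ (n : ℤ) ∣ x := by
  rw [Real.sin_eq_zero_iff]
  constructor
  · rintro ⟨m, hm⟩
    refine ⟨m, ?_⟩
    have : (m : ℝ) * n = x := by
      field_simp at hm
      nlinarith [Real.pi_pos]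
    exact_mod_cast (by linarith : (x : ℝ) = n * m)
  · rintro ⟨m, rfl⟩
    exact ⟨m, by push_cast; field_simp⟩

theorem sin_pi_mul_div_ne_zero {x : ℤ} (hx0 : 0 < x) (hxn : x < n) :
    Real.sin (π * x / n) ≠ 0 := fun hx =>
  absurd (Int.le_of_dvd hx0 ((sin_pi_mul_div_eq_zero_iff (by omega) x).1 hx)) (by omega)

theorem modEq_of_exp_pi_mul_I_div_zpow_mul_ofReal_eq (hn : n ≠ 0) {a b : ℤ} {x y : ℝ}
    (hy : y ≠ 0) (h : cexp (π * I / n) ^ a * x = cexp (π * I / n) ^ b * y) :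
    a ≡ b [ZMOD n] := by
  have hζ : cexp (π * I / n) ^ (b - a) * y = x := by
    rw [zpow_sub₀ (Complex.exp_ne_zero _), div_mul_eq_mul_div, ← h]
    field_simp
  rw [exp_pi_mul_I_div_zpow,
    show (π * I * (b - a : ℤ) / n : ℂ) = (π * (b - a : ℤ) / n : ℝ) * I by push_cast; ring]
    at hζ
  have him := congrArg Complex.im hζ
  simp only [Complex.exp_ofReal_mul_I_im, Complex.mul_im, Complex.exp_ofReal_mul_I_re, ofReal_im,
    ofReal_re, mul_zero, zero_add] at him
  exact Int.modEq_iff_dvd.2 ((sin_pi_mul_div_eq_zero_iff hn _).1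
    ((mul_eq_zero.1 him).resolve_right hy))

end

theorem statement12_general (p q q' c : ℤ)
    (hq0 : 0 < q) (hqp : q < p)
    (h : ∀ k : ℤ, ¬ p ∣ k →
      (-1 : ℂ) ^ k * Complex.exp (Real.pi * Complex.I * (k : ℂ) ^ 2 * (q : ℂ) / (p : ℂ)) *
          ((Real.sin (Real.pi * (c : ℝ) * (k : ℝ) * (q' : ℝ) / (p : ℝ)) : ℂ)) *
          ((Real.sin (Real.pi * (c : ℝ) * (k : ℝ) / (p : ℝ)) : ℂ))
        = (-1 : ℂ) ^ (c * k) *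
            Complex.exp (Real.pi * Complex.I * (c : ℂ) ^ 2 * (k : ℂ) ^ 2 * (q' : ℂ) / (p : ℂ)) *
            ((Real.sin (Real.pi * (k : ℝ) * (q : ℝ) / (p : ℝ)) : ℂ)) *
            ((Real.sin (Real.pi * (k : ℝ) / (p : ℝ)) : ℂ))) :
    q ≡ q' [ZMOD p] ∨ q * q' ≡ 1 [ZMOD p] := by
  lift p to ℕ using by omega
  have hp0 : p ≠ 0 := by omega
  set ζ := cexp (π * I / p) with hζ_def
  have hζ : IsPrimitiveRoot ζ (2 * p) := isPrimitiveRoot_exp_pi_mul_I_div hp0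
  have hζ0 : ζ ≠ 0 := Complex.exp_ne_zero _
  have hζk : ∀ k : ℤ, ζ ^ (p * k + k ^ 2 * q)
        * ((Real.sin (π * (c * q' * k : ℤ) / p) * Real.sin (π * (c * k : ℤ) / p) : ℝ) : ℂ)
      = ζ ^ (p * (c * k) + c ^ 2 * k ^ 2 * q')
        * ((Real.sin (π * (q * k : ℤ) / p) * Real.sin (π * k / p) : ℝ) : ℂ) := by
    intro k
    by_cases hk : (p : ℤ) ∣ k
    · rw [(sin_pi_mul_div_eq_zero_iff hp0 _).2 hk,
        (sin_pi_mul_div_eq_zero_iff hp0 _).2 (hk.mul_left c)]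
      simp
    · convert h k hk using 1 <;>
      · rw [neg_one_zpow_eq_exp_pi_mul_I_div_zpow hp0, zpow_add₀ hζ0, hζ_def,
          exp_pi_mul_I_div_zpow, exp_pi_mul_I_div_zpow]
        push_cast
        ring_nf
  have hmod : q ≡ c ^ 2 * q' [ZMOD p] := by
    have h₁ := modEq_of_exp_pi_mul_I_div_zpow_mul_ofReal_eq hp0 (mul_ne_zero
      (sin_pi_mul_div_ne_zero (by omega) (by omega)) (sin_pi_mul_div_ne_zero one_pos (by omega)))
      (hζk 1)
    have hp1 : (p : ℤ) * 1 ≡ p * (c * 1) [ZMOD p] := Int.modEq_iff_dvd.2 ⟨c - 1, by ring⟩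
    simpa using hp1.add_left_cancel h₁
  obtain ⟨m, hm⟩ := Int.modEq_iff_dvd.1 hmod.symm
  have hprod : ∀ k : ℤ,
      ζ ^ (p * (1 + m) * k) * (ζ ^ (-(c * q' * k)) - ζ ^ (c * q' * k))
          * (ζ ^ (-(c * k)) - ζ ^ (c * k))
        = ζ ^ (p * c * k) * (ζ ^ (-(q * k)) - ζ ^ (q * k))
          * (ζ ^ (-(1 * k)) - ζ ^ (1 * k)) := by
    intro k
    have hk := hζ.zpow_mul_eq_of_zpow_add_sq_eq hp0 hm (hζk k)
    rw [ofReal_sin_pi_mul_div_mul_sin, ofReal_sin_pi_mul_div_mul_sin, ← hζ_def] at hk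
    rw [one_mul]
    linear_combination (-4) * hk
  rcases sq_modEq_one_or_sq_modEq_one_of_sinProdCoeff_eq hq0 hqp
      (by exact_mod_cast hζ.sinProdCoeff_eq_of_forall_eq (by omega) hprod) with hcq' | hc
  · right
    calc q * q' ≡ c ^ 2 * q' * q' [ZMOD p] := hmod.mul_right _
      _ = (c * q') ^ 2 := by ring
      _ ≡ 1 [ZMOD p] := hcq'
  · left
    calc q ≡ c ^ 2 * q' [ZMOD p] := hmod
      _ ≡ 1 * q' [ZMOD p] := hc.mul_right _
      _ = q' := one_mul _

/-- if the `r = 2` lens-space invariant identity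
`(−1)^k e^{iπk²q/p} sin(πckq′/p) sin(πck/p) = (−1)^{ck} e^{iπc²k²q′/p} sin(πkq/p) sin(πk/p)`
holds for every integer `k` not divisible by `p`, then `q ≡ q′ (mod p)` or
`q·q′ ≡ 1 (mod p)`. -/
theorem statement12 (p q q' c : ℤ) (hp : 1 < p)
    (hq0 : 0 < q) (hqp : q < p) (hq'0 : 0 < q') (hq'p : q' < p)
    (hq : IsCoprime q p) (hq' : IsCoprime q' p) (hc : IsCoprime c p)
    (h : ∀ k : ℤ, ¬ p ∣ k →
      (-1 : ℂ) ^ k * Complex.exp (Real.pi * Complex.I * (k : ℂ) ^ 2 * (q : ℂ) / (p : ℂ)) *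
          ((Real.sin (Real.pi * (c : ℝ) * (k : ℝ) * (q' : ℝ) / (p : ℝ)) : ℂ)) *
          ((Real.sin (Real.pi * (c : ℝ) * (k : ℝ) / (p : ℝ)) : ℂ))
        = (-1 : ℂ) ^ (c * k) *
            Complex.exp (Real.pi * Complex.I * (c : ℂ) ^ 2 * (k : ℂ) ^ 2 * (q' : ℂ) / (p : ℂ)) *
            ((Real.sin (Real.pi * (k : ℝ) * (q : ℝ) / (p : ℝ)) : ℂ)) *
            ((Real.sin (Real.pi * (k : ℝ) / (p : ℝ)) : ℂ))) :
    q ≡ q' [ZMOD p] ∨ q * q' ≡ 1 [ZMOD p] :=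
  statement12_general p q q' c hq0 hqp h
end

section
/- There exists a group homomorphism ρ from SL(2,ℤ) (the special linear group of 2×2 integer matrices of determinant 1) to GL(2,ℂ) such that ρ sends [[1,1],[0,1]] to [[1,−2i],[0,1]] and sends [[0,−1],[1,0]] to [[0,2i],[i/2,0]] (which equals −i·[[0,−2],[−1/2,0]]), and such that for every A ∈ SL(2,ℤ), if ρ(A) is a scalar matrix (i.e. ρ(A) = c·Id for some c ∈ ℂ) then A = Id or A = −Id. (This is the content of the paper's theorem that for g = 1 and r = 2 the mapping class group representation on 𝕍(S¹×S¹) with ω = 0 — given in the basis [T_{xP₀}], [T_{P₀}] by T ↦ [[1,−2i],[0,1]] and S ↦ [[0,−2],[−1/2,0]] — is faithful modulo the center.) -/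
/-!
Conjugating the integral representation `SL(2,ℤ) ⊆ GL(2,ℂ)` by `diag(-2i, 1)` gives a
homomorphism with the prescribed images of `T` and `S`. Since conjugation fixes scalar matrices and
`ℤ → ℂ` is injective, `ρ(A)` is scalar only if `A` is central in `SL(2,ℤ)`, i.e. `A = r • 1` with
`r ^ 2 = 1`, so `A = ±1`.
-/

open Matrix

namespace Matrix.SpecialLinearGroup

variable {n R S : Type*} [Fintype n] [DecidableEq n] [CommRing R] [CommRing S]

def conjMap (f : R →+* S) (P : GL n S) : SpecialLinearGroup n R →* GL n S :=
  (MulAut.conj P).toMonoidHom.comp (toGL.comp (map f))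

theorem coe_conjMap_apply (f : R →+* S) (P : GL n S) (A : SpecialLinearGroup n R) :
    (conjMap f P A : Matrix n n S) = P * (A : Matrix n n R).map f * P⁻¹ := rfl

theorem mem_center_of_coe_conjMap_eq_smul_one {f : R →+* S} (hf : Function.Injective f)
    {P : GL n S} {A : SpecialLinearGroup n R} {c : S}
    (hA : (conjMap f P A : Matrix n n S) = c • 1) :
    A ∈ Subgroup.center (SpecialLinearGroup n R) := by
  have hmap : (A : Matrix n n R).map f = c • 1 := by
    calc (A : Matrix n n R).map f = (P⁻¹ : GL n S) * (conjMap f P A : Matrix n n S) * P := by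
          simp [coe_conjMap_apply, ← Matrix.mul_assoc]
      _ = c • 1 := by simp [hA]
  refine Subgroup.mem_center_iff.mpr fun B ↦ Subtype.ext <| Matrix.map_injective hf ?_
  simp [Matrix.map_mul, hmap]

theorem coe_eq_one_or_neg_one_of_mem_center [IsDomain R] {A : SpecialLinearGroup (Fin 2) R}
    (hA : A ∈ Subgroup.center (SpecialLinearGroup (Fin 2) R)) :
    (A : Matrix (Fin 2) (Fin 2) R) = 1 ∨ (A : Matrix (Fin 2) (Fin 2) R) = -1 := by
  obtain ⟨r, hr, hrA⟩ := mem_center_iff.mp hA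
  rw [Fintype.card_fin, sq_eq_one_iff] at hr
  rw [← hrA]
  rcases hr with rfl | rfl
  exacts [.inl (map_one _), .inr (by rw [map_neg, map_one])]

end Matrix.SpecialLinearGroup

open Complex

noncomputable def basisChange : GL (Fin 2) ℂ :=
  ⟨!![-2 * I, 0; 0, 1], !![I / 2, 0; 0, 1],
    by rw [one_fin_two, mul_fin_two]; ring_nf; simp,
    by rw [one_fin_two, mul_fin_two]; ring_nf; simp⟩

open Matrix.SpecialLinearGroup

noncomputable def torusRep : SpecialLinearGroup (Fin 2) ℤ →* GL (Fin 2) ℂ :=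
  conjMap (Int.castRingHom ℂ) basisChange

theorem coe_torusRep_apply (A : SpecialLinearGroup (Fin 2) ℤ) :
    (torusRep A : Matrix (Fin 2) (Fin 2) ℂ) =
      !![(A 0 0 : ℂ), -2 * I * A 0 1; I / 2 * A 1 0, A 1 1] := by
  rw [torusRep, coe_conjMap_apply, eta_fin_two ((A : Matrix (Fin 2) (Fin 2) ℤ).map _)]
  simp [basisChange]
  ring_nf
  simp

/-- there is a group homomorphism `ρ : SL(2,ℤ) → GL(2,ℂ)` sending
`T = [[1,1],[0,1]]` to `[[1,−2i],[0,1]]` and `S = [[0,−1],[1,0]]` to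
`[[0,2i],[i/2,0]]`, such that `ρ(A)` scalar implies `A = ±Id`. -/
theorem statement15 :
    ∃ ρ : Matrix.SpecialLinearGroup (Fin 2) ℤ →* GL (Fin 2) ℂ,
      ((ρ ⟨!![1, 1; 0, 1], by norm_num [Matrix.det_fin_two_of]⟩ :
          GL (Fin 2) ℂ) : Matrix (Fin 2) (Fin 2) ℂ)
          = !![1, -2 * Complex.I; 0, 1] ∧
      ((ρ ⟨!![0, -1; 1, 0], by norm_num [Matrix.det_fin_two_of]⟩ :
          GL (Fin 2) ℂ) : Matrix (Fin 2) (Fin 2) ℂ)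
          = !![0, 2 * Complex.I; Complex.I / 2, 0] ∧
      ∀ A : Matrix.SpecialLinearGroup (Fin 2) ℤ,
        (∃ cc : ℂ, ((ρ A : GL (Fin 2) ℂ) : Matrix (Fin 2) (Fin 2) ℂ)
            = cc • (1 : Matrix (Fin 2) (Fin 2) ℂ)) →
        (A : Matrix (Fin 2) (Fin 2) ℤ) = 1 ∨ (A : Matrix (Fin 2) (Fin 2) ℤ) = -1 := by
  refine ⟨torusRep, ?_, ?_, ?_⟩
  · exact (coe_torusRep_apply _).trans (by simp)
  · exact (coe_torusRep_apply _).trans (by simp)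
  · rintro A ⟨c, hc⟩
    exact coe_eq_one_or_neg_one_of_mem_center
      (mem_center_of_coe_conjMap_eq_smul_one Int.cast_injective hc)
end
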